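/- Let Ω be a proper subdomain of a metric space with length structure, let x₁, x₂ ∈ Ω, and let γ be a quasihyperbolic geodesic joining x₁ and x₂ with d(x₁,x₂) ≥ (1/2)·max{d_Ω(x₁), d_Ω(x₂)}. Then there exist points y₁ = x₁, y₂, …, y_{k₁}, y_{k₁+1} = x₂ consecutively on γ and balls B_i = B(y_i, d_Ω(y_i)/4), 1 ≤ i ≤ k₁, such that: (a) y_{i+1} ∉ B_i and B_i ∩ B_{i+1} ≠ ∅ for 1 ≤ i ≤ k₁−1; (b) B_i ∩ B_j = ∅ whenever |i−j| > 1; (c) ℓ(γ[y_i,y_{i+1}]) ≤ (11/9)·d_Ω(y_i) ≤ (44/9)·d(y_i,y_{i+1}) for 1 ≤ i ≤ k₁−1; (d) log(5/4) ≤ k_Ω(y_i,y_{i+1}) ≤ 20/27 for 1 ≤ i ≤ k₁−1; and (e) ℓ(γ[y_{k₁},y_{k₁+1}]) ≤ (9/20)·d_Ω(y_{k₁}) and k_Ω(y_{k₁},y_{k₁+1}) ≤ 10/27. -/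
import Mathlib


open Metric Set Real MeasureTheory

noncomputable section

variable {X : Type*} [MetricSpace X]

/-- Distance from `z` to the complement of `Ω`; for `z` in an open set `Ω` this is the
distance to the boundary `∂Ω`. -/
def distCompl (Ω : Set X) (z : X) : ℝ := Metric.infDist z Ωᶜ

/-- `γ` restricted to `[0, L]` is a unit-speed (arclength parametrized) rectifiable curve
with values in `Ω`. -/
structure IsUnitSpeedIn (Ω : Set X) (γ : ℝ → X) (L : ℝ) : Prop where
  nonneg : 0 ≤ L
  mem : ∀ t ∈ Set.Icc (0:ℝ) L, γ t ∈ Ω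
  unitSpeed : ∀ s ∈ Set.Icc (0:ℝ) L, ∀ t ∈ Set.Icc (0:ℝ) L, s ≤ t →
    eVariationOn γ (Set.Icc s t) = ENNReal.ofReal (t - s)

/-- Quasihyperbolic length `∫_γ |dz| / d_Ω(z)` of a unit-speed curve in `Ω`
parametrized on `[0, L]`. -/
def qhLength (Ω : Set X) (γ : ℝ → X) (L : ℝ) : ℝ :=
  ∫ s in (0:ℝ)..L, 1 / distCompl Ω (γ s)

/-- Quasihyperbolic distance in `Ω`: infimum of quasihyperbolic lengths of rectifiable
(unit-speed parametrized) curves in `Ω` joining the two points. -/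
def qhDist (Ω : Set X) (x y : X) : ℝ :=
  ⨅ p : {p : (ℝ → X) × ℝ // IsUnitSpeedIn Ω p.1 p.2 ∧ p.1 0 = x ∧ p.1 p.2 = y},
    qhLength Ω p.1.1 p.1.2

/-- Inner (intrinsic) distance in `Ω`: infimum of lengths of rectifiable curves in `Ω`
joining the two points. -/
def innerDist (Ω : Set X) (x y : X) : ℝ :=
  ⨅ p : {p : (ℝ → X) × ℝ // IsUnitSpeedIn Ω p.1 p.2 ∧ p.1 0 = x ∧ p.1 p.2 = y},
    p.1.2

/-- A quasihyperbolic geodesic: a unit-speed curve in `Ω` each of whose subarcs realizes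
the quasihyperbolic distance between its endpoints. -/
def IsQHGeodesic (Ω : Set X) (γ : ℝ → X) (L : ℝ) : Prop :=
  IsUnitSpeedIn Ω γ L ∧ ∀ s ∈ Set.Icc (0:ℝ) L, ∀ t ∈ Set.Icc (0:ℝ) L, s ≤ t →
    (∫ u in s..t, 1 / distCompl Ω (γ u)) = qhDist Ω (γ s) (γ t)

/-- `(Ω, k_Ω)` is a geodesic space: any two points of `Ω` are joined by a
quasihyperbolic geodesic. -/
def QHGeodesicSpace (Ω : Set X) : Prop :=
  ∀ x ∈ Ω, ∀ y ∈ Ω, ∃ γ L, IsQHGeodesic Ω γ L ∧ γ 0 = x ∧ γ L = y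

/-- `(Ω, k_Ω)` is `δ`-Gromov hyperbolic: geodesic triangles for the quasihyperbolic
metric are `δ`-thin. -/
def QHGromovHyperbolic (Ω : Set X) (δ : ℝ) : Prop :=
  ∀ γ₁ L₁ γ₂ L₂ γ₃ L₃, IsQHGeodesic Ω γ₁ L₁ → IsQHGeodesic Ω γ₂ L₂ →
    IsQHGeodesic Ω γ₃ L₃ → γ₂ 0 = γ₁ 0 → γ₃ 0 = γ₁ L₁ → γ₂ L₂ = γ₃ L₃ →
    ∀ s ∈ Set.Icc (0:ℝ) L₁, ∃ u ∈ γ₂ '' Set.Icc (0:ℝ) L₂ ∪ γ₃ '' Set.Icc (0:ℝ) L₃,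
      qhDist Ω (γ₁ s) u ≤ δ

/-- The `C`-Gehring–Hayman inequality: every quasihyperbolic geodesic has length
at most `C` times the inner distance between its endpoints. -/
def GehringHayman (Ω : Set X) (C : ℝ) : Prop :=
  ∀ γ L, IsQHGeodesic Ω γ L → L ≤ C * innerDist Ω (γ 0) (γ L)

/-- The `C`-ball separation condition: for each quasihyperbolic geodesic `γ`, each point
`z` on `γ` and each curve `α` in `Ω` with the same endpoints, the inner-metric ball
`B_σ(z, C·d_Ω(z))` meets `α`. -/
def BallSeparation (Ω : Set X) (C : ℝ) : Prop :=
  ∀ γ L, IsQHGeodesic Ω γ L → ∀ s ∈ Set.Icc (0:ℝ) L,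
    ∀ α M, IsUnitSpeedIn Ω α M → α 0 = γ 0 → α M = γ L →
      ∃ t ∈ Set.Icc (0:ℝ) M, innerDist Ω (γ s) (α t) < C * distCompl Ω (γ s)

/-- `X` is a length space: the distance between any two points is the infimum of lengths
of curves joining them. -/
def IsLengthSpace (X : Type*) [MetricSpace X] : Prop :=
  ∀ x y : X, ∀ ε > 0, ∃ γ : ℝ → X, ∃ L, IsUnitSpeedIn (Set.univ : Set X) γ L ∧
    γ 0 = x ∧ γ L = y ∧ L ≤ dist x y + ε

/-- `X` is `Q`-doubling: every `r/2`-separated subset of a ball of radius `r` has at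
most `Q` points. -/
def QDoubling (X : Type*) [MetricSpace X] (Q : ℝ) : Prop :=
  ∀ x : X, ∀ r : ℝ, ∀ S : Finset X, (↑S : Set X) ⊆ Metric.ball x r →
    (∀ a ∈ S, ∀ b ∈ S, a ≠ b → r / 2 ≤ dist a b) → (S.card : ℝ) ≤ Q

/-- `Ω` is a proper subdomain: a nonempty, open, connected set different from the whole
space. -/
def IsProperSubdomain (Ω : Set X) : Prop :=
  IsOpen Ω ∧ IsConnected Ω ∧ Ω ≠ Set.univ

/-- The `c₀`-LLC-2 condition: points of `Ω` outside a closed ball `B̄(x, r)` can be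
joined by a curve in `Ω` outside `B̄(x, r/c₀)`. -/
def LLC2 (Ω : Set X) (c₀ : ℝ) : Prop :=
  ∀ x : X, ∀ r : ℝ, ∀ a ∈ Ω \ Metric.closedBall x r, ∀ b ∈ Ω \ Metric.closedBall x r,
    ∃ γ L, IsUnitSpeedIn (Ω \ Metric.closedBall x (r / c₀)) γ L ∧ γ 0 = a ∧ γ L = b

section AuxLemmas

variable {Ω : Set X} {γ : ℝ → X} {L : ℝ}

lemma IsUnitSpeedIn.dist_le' (h : IsUnitSpeedIn Ω γ L) {s t : ℝ}
    (hs : s ∈ Set.Icc (0:ℝ) L) (ht : t ∈ Set.Icc (0:ℝ) L) (hst : s ≤ t) :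
    dist (γ s) (γ t) ≤ t - s := by
  have h1 : edist (γ s) (γ t) ≤ eVariationOn γ (Set.Icc s t) :=
    eVariationOn.edist_le γ (Set.left_mem_Icc.2 hst) (Set.right_mem_Icc.2 hst)
  rw [h.unitSpeed s hs t ht hst, edist_dist] at h1
  exact (ENNReal.ofReal_le_ofReal_iff (by linarith)).1 h1

lemma mem_of_distCompl_pos {z : X} (h : 0 < distCompl Ω z) : z ∈ Ω := by
  by_contra hz
  have h0 : Metric.infDist z Ωᶜ = 0 := Metric.infDist_zero_of_mem hz
  rw [distCompl, h0] at h
  exact lt_irrefl 0 h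

lemma distCompl_pos_of_mem (hopen : IsOpen Ω) (hne : Ω ≠ Set.univ) {z : X} (hz : z ∈ Ω) :
    0 < distCompl Ω z := by
  have h1 : (Ωᶜ).Nonempty := Set.nonempty_compl.2 hne
  exact (hopen.isClosed_compl.notMem_iff_infDist_pos h1).1 (by simpa using hz)

lemma abs_distCompl_sub_le (Ω : Set X) (x y : X) :
    |distCompl Ω x - distCompl Ω y| ≤ dist x y := by
  have h := (lipschitz_infDist_pt (Ωᶜ)).dist_le_mul x y
  simpa [Real.dist_eq, distCompl] using h

lemma IsUnitSpeedIn.continuousOn' (h : IsUnitSpeedIn Ω γ L) :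
    ContinuousOn γ (Set.Icc 0 L) := by
  have hlip : LipschitzOnWith 1 γ (Set.Icc 0 L) := by
    rw [lipschitzOnWith_iff_dist_le_mul]
    intro s hs u hu
    rcases le_total s u with hsu | hus
    · calc dist (γ s) (γ u) ≤ u - s := h.dist_le' hs hu hsu
        _ ≤ 1 * dist s u := by
            rw [one_mul, Real.dist_eq, abs_sub_comm]; exact le_abs_self _
    · calc dist (γ s) (γ u) = dist (γ u) (γ s) := dist_comm _ _
        _ ≤ s - u := h.dist_le' hu hs hus
        _ ≤ 1 * dist s u := by rw [one_mul, Real.dist_eq]; exact le_abs_self _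
  exact hlip.continuousOn

lemma IsUnitSpeedIn.continuousOn_inv_distCompl (h : IsUnitSpeedIn Ω γ L)
    (hpos : ∀ s ∈ Set.Icc (0:ℝ) L, 0 < distCompl Ω (γ s)) :
    ContinuousOn (fun s => 1 / distCompl Ω (γ s)) (Set.Icc 0 L) := by
  have h1 : ContinuousOn (fun s => distCompl Ω (γ s)) (Set.Icc 0 L) :=
    (Metric.continuous_infDist_pt _).comp_continuousOn h.continuousOn'
  exact continuousOn_const.div h1 (fun s hs => ne_of_gt (hpos s hs))

lemma qhLength_nonneg' {α : ℝ → X} {M : ℝ} (h : IsUnitSpeedIn Ω α M) :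
    0 ≤ qhLength Ω α M :=
  intervalIntegral.integral_nonneg h.nonneg
    (fun u _ => one_div_nonneg.2 Metric.infDist_nonneg)

lemma qhDist_le_qhLength {α : ℝ → X} {M : ℝ} (h : IsUnitSpeedIn Ω α M)
    {x y : X} (h0 : α 0 = x) (hM : α M = y) : qhDist Ω x y ≤ qhLength Ω α M := by
  have hbdd : BddBelow (Set.range fun p : {p : (ℝ → X) × ℝ //
      IsUnitSpeedIn Ω p.1 p.2 ∧ p.1 0 = x ∧ p.1 p.2 = y} =>
      qhLength Ω p.1.1 p.1.2) := by
    refine ⟨0, ?_⟩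
    rintro r ⟨p, rfl⟩
    exact qhLength_nonneg' p.2.1
  exact ciInf_le hbdd ⟨(α, M), h, h0, hM⟩

lemma integral_inv_sub_eq {a s t : ℝ} (hst : s ≤ t) (h : 0 < a - t) :
    ∫ u in s..t, (a - u)⁻¹ = Real.log (a - s) - Real.log (a - t) := by
  have hs : 0 < a - s := by linarith
  rw [intervalIntegral.integral_comp_sub_left (fun x => x⁻¹) a]
  rw [integral_inv (by
    rw [Set.uIcc_of_le (by linarith : a - t ≤ a - s)]
    rintro ⟨h1, _⟩
    linarith)]
  rw [Real.log_div (ne_of_gt hs) (ne_of_gt h)]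

lemma integral_inv_add_eq {c s t : ℝ} (hst : s ≤ t) (h : 0 < c + s) :
    ∫ u in s..t, (c + u)⁻¹ = Real.log (c + t) - Real.log (c + s) := by
  have ht : 0 < c + t := by linarith
  rw [intervalIntegral.integral_comp_add_left (fun x => x⁻¹) c]
  rw [integral_inv (by
    rw [Set.uIcc_of_le (by linarith : c + s ≤ c + t)]
    rintro ⟨h1, _⟩
    linarith)]
  rw [Real.log_div (ne_of_gt ht) (ne_of_gt h)]

end AuxLemmas
section KeyLemmas

variable {Ω : Set X}

/-- One-sided upper bound for the quasihyperbolic distance via a near-geodesic curve. -/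
lemma qhDist_le_log_one_sided (hX : IsLengthSpace X) (Ω : Set X) {x y : X} {ε : ℝ}
    (hε : 0 < ε) (hlt : dist x y + ε < distCompl Ω x) :
    qhDist Ω x y ≤ Real.log (distCompl Ω x) - Real.log (distCompl Ω x - dist x y - ε) := by
  set a := distCompl Ω x with ha
  obtain ⟨α, M, hα, h0, hM, hlen⟩ := hX x y ε hε
  have hd : 0 ≤ dist x y := dist_nonneg
  have hM0 : 0 ≤ M := hα.nonneg
  have hMlt : M < a := lt_of_le_of_lt hlen hlt
  -- lower bound for distCompl along the curve
  have hlow : ∀ s ∈ Set.Icc (0:ℝ) M, a - s ≤ distCompl Ω (α s) := by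
    intro s hs
    have h1 : dist x (α s) ≤ s := by
      have := hα.dist_le' (Set.left_mem_Icc.2 hM0) hs hs.1
      rw [h0] at this; simpa using this
    have h2 := abs_distCompl_sub_le Ω x (α s)
    rw [abs_le] at h2
    have := h2.1
    rw [← ha] at this
    linarith
  have hpos : ∀ s ∈ Set.Icc (0:ℝ) M, 0 < distCompl Ω (α s) := by
    intro s hs
    have := hlow s hs
    have : a - M ≤ a - s := by linarith [hs.2]
    linarith [hlow s hs, hs.2]
  have hαΩ : IsUnitSpeedIn Ω α M :=
    ⟨hα.nonneg, fun s hs => mem_of_distCompl_pos (hpos s hs), hα.unitSpeed⟩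
  have hqh := qhDist_le_qhLength hαΩ h0 hM
  -- bound the qh length
  have hcont := hαΩ.continuousOn_inv_distCompl hpos
  have hint1 : IntervalIntegrable (fun s => 1 / distCompl Ω (α s)) volume 0 M :=
    (hcont.mono (by rw [Set.uIcc_of_le hM0])).intervalIntegrable
  have hint2 : IntervalIntegrable (fun s => (a - s)⁻¹) volume 0 M := by
    apply ContinuousOn.intervalIntegrable
    apply ContinuousOn.inv₀ (by fun_prop)
    intro s hs
    rw [Set.uIcc_of_le hM0] at hs
    have : s ≤ M := hs.2
    intro hcon; linarith [sub_eq_zero.1 hcon]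
  have hmono : qhLength Ω α M ≤ ∫ s in (0:ℝ)..M, (a - s)⁻¹ := by
    apply intervalIntegral.integral_mono_on hM0 hint1 hint2
    intro s hs
    have h1 := hlow s hs
    have h2 : 0 < a - s := by linarith [hs.2]
    rw [← one_div]
    exact one_div_le_one_div_of_le h2 h1
  have heval : ∫ s in (0:ℝ)..M, (a - s)⁻¹ = Real.log (a - 0) - Real.log (a - M) :=
    integral_inv_sub_eq hM0 (by linarith)
  have hfin : Real.log (a - M) ≥ Real.log (a - dist x y - ε) := by
    rcases eq_or_lt_of_le hlen with h | h
    · rw [h]; ring_nf; exact le_refl _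
    · exact le_of_lt (Real.log_lt_log (by linarith) (by linarith))
  calc qhDist Ω x y ≤ qhLength Ω α M := hqh
    _ ≤ Real.log (a - 0) - Real.log (a - M) := by rw [← heval]; exact hmono
    _ ≤ Real.log a - Real.log (a - dist x y - ε) := by
        rw [sub_zero]; linarith

/-- Two-sided upper bound for the quasihyperbolic distance via a near-geodesic curve. -/
lemma qhDist_le_log_two_sided (hX : IsLengthSpace X) (Ω : Set X) {x y : X} {ε : ℝ}
    (hε : 0 < ε) (hax : 0 < distCompl Ω x) (hay : 0 < distCompl Ω y)
    (hlt : dist x y + ε < distCompl Ω x + distCompl Ω y) :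
    qhDist Ω x y ≤ Real.log (distCompl Ω x) + Real.log (distCompl Ω y)
      - 2 * Real.log ((distCompl Ω x + distCompl Ω y - dist x y - ε) / 2) := by
  set a := distCompl Ω x with ha
  set b := distCompl Ω y with hb
  obtain ⟨α, M, hα, h0, hM, hlen⟩ := hX x y ε hε
  have hd : 0 ≤ dist x y := dist_nonneg
  have hM0 : 0 ≤ M := hα.nonneg
  have hdM : dist x y ≤ M := by
    have := hα.dist_le' (Set.left_mem_Icc.2 hM0) (Set.right_mem_Icc.2 hM0) hM0
    rw [h0, hM] at this; linarith
  have habd : |a - b| ≤ dist x y := by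
    have := abs_distCompl_sub_le Ω x y
    rw [← ha, ← hb] at this; exact this
  rw [abs_le] at habd
  set w := (a + b - M) / 2 with hw
  set w₀ := (a + b - dist x y - ε) / 2 with hw₀
  have hww₀ : w₀ ≤ w := by rw [hw, hw₀]; linarith
  have hw₀pos : 0 < w₀ := by rw [hw₀]; linarith
  have hwpos : 0 < w := lt_of_lt_of_le hw₀pos hww₀
  set σ := (a - b + M) / 2 with hσ
  have hσ0 : 0 ≤ σ := by rw [hσ]; linarith [habd.2]
  have hσM : σ ≤ M := by rw [hσ]; linarith [habd.1]
  have haσ : a - σ = w := by rw [hσ, hw]; ring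
  have hbσ : b - M + σ = w := by rw [hσ, hw]; ring
  -- lower bounds for distCompl along the curve
  have hlow1 : ∀ s ∈ Set.Icc (0:ℝ) M, a - s ≤ distCompl Ω (α s) := by
    intro s hs
    have h1 : dist x (α s) ≤ s := by
      have := hα.dist_le' (Set.left_mem_Icc.2 hM0) hs hs.1
      rw [h0] at this; simpa using this
    have h2 := abs_distCompl_sub_le Ω x (α s)
    rw [abs_le] at h2
    have := h2.1
    rw [← ha] at this
    linarith
  have hlow2 : ∀ s ∈ Set.Icc (0:ℝ) M, b - (M - s) ≤ distCompl Ω (α s) := by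
    intro s hs
    have h1 : dist y (α s) ≤ M - s := by
      have := hα.dist_le' hs (Set.right_mem_Icc.2 hM0) hs.2
      rw [hM] at this; rw [dist_comm]; simpa using this
    have h2 := abs_distCompl_sub_le Ω y (α s)
    rw [abs_le] at h2
    have := h2.1
    rw [← hb] at this
    linarith
  have hlow : ∀ s ∈ Set.Icc (0:ℝ) M, w ≤ distCompl Ω (α s) := by
    intro s hs
    rcases le_total s σ with h | h
    · have := hlow1 s hs; linarith [haσ]
    · have := hlow2 s hs
      have : b - M + s ≤ distCompl Ω (α s) := by linarith [hlow2 s hs]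
      linarith [hbσ]
  have hpos : ∀ s ∈ Set.Icc (0:ℝ) M, 0 < distCompl Ω (α s) :=
    fun s hs => lt_of_lt_of_le hwpos (hlow s hs)
  have hαΩ : IsUnitSpeedIn Ω α M :=
    ⟨hα.nonneg, fun s hs => mem_of_distCompl_pos (hpos s hs), hα.unitSpeed⟩
  have hqh := qhDist_le_qhLength hαΩ h0 hM
  have hcont := hαΩ.continuousOn_inv_distCompl hpos
  have hint : ∀ u v : ℝ, u ∈ Set.Icc (0:ℝ) M → v ∈ Set.Icc (0:ℝ) M →
      IntervalIntegrable (fun s => 1 / distCompl Ω (α s)) volume u v :=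
    fun u v hu hv => (hcont.mono (Set.uIcc_subset_Icc hu hv)).intervalIntegrable
  have hσIcc : σ ∈ Set.Icc (0:ℝ) M := ⟨hσ0, hσM⟩
  have h0Icc : (0:ℝ) ∈ Set.Icc (0:ℝ) M := Set.left_mem_Icc.2 hM0
  have hMIcc : M ∈ Set.Icc (0:ℝ) M := Set.right_mem_Icc.2 hM0
  -- split the integral
  have hsplit : qhLength Ω α M = (∫ s in (0:ℝ)..σ, 1 / distCompl Ω (α s))
      + ∫ s in σ..M, 1 / distCompl Ω (α s) := by
    rw [qhLength]
    rw [← intervalIntegral.integral_add_adjacent_intervals (hint 0 σ h0Icc hσIcc)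
      (hint σ M hσIcc hMIcc)]
  -- first piece
  have hint2 : IntervalIntegrable (fun s => (a - s)⁻¹) volume 0 σ := by
    apply ContinuousOn.intervalIntegrable
    apply ContinuousOn.inv₀ (by fun_prop)
    intro s hs
    rw [Set.uIcc_of_le hσ0] at hs
    have : s ≤ σ := hs.2
    intro hcon
    have : a - s = 0 := hcon
    linarith [haσ, hwpos]
  have hp1 : (∫ s in (0:ℝ)..σ, 1 / distCompl Ω (α s)) ≤ Real.log a - Real.log w := by
    have hcmp : (∫ s in (0:ℝ)..σ, 1 / distCompl Ω (α s)) ≤ ∫ s in (0:ℝ)..σ, (a - s)⁻¹ := by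
      apply intervalIntegral.integral_mono_on hσ0 (hint 0 σ h0Icc hσIcc) hint2
      intro s hs
      have h1 : a - s ≤ distCompl Ω (α s) := hlow1 s ⟨hs.1, le_trans hs.2 hσM⟩
      have h2 : 0 < a - s := by
        have : w ≤ a - s := by rw [← haσ]; linarith [hs.2]
        linarith
      rw [← one_div]
      exact one_div_le_one_div_of_le h2 h1
    have heval : ∫ s in (0:ℝ)..σ, (a - s)⁻¹ = Real.log (a - 0) - Real.log (a - σ) :=
      integral_inv_sub_eq hσ0 (by rw [haσ]; exact hwpos)
    rw [heval, sub_zero, haσ] at hcmp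
    exact hcmp
  -- second piece
  have hint3 : IntervalIntegrable (fun s => (b - M + s)⁻¹) volume σ M := by
    apply ContinuousOn.intervalIntegrable
    apply ContinuousOn.inv₀ (by fun_prop)
    intro s hs
    rw [Set.uIcc_of_le hσM] at hs
    intro hcon
    have : b - M + s = 0 := hcon
    have : b - M + σ ≤ 0 := by linarith [hs.1]
    linarith [hbσ, hwpos]
  have hp2 : (∫ s in σ..M, 1 / distCompl Ω (α s)) ≤ Real.log b - Real.log w := by
    have hcmp : (∫ s in σ..M, 1 / distCompl Ω (α s)) ≤ ∫ s in σ..M, (b - M + s)⁻¹ := by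
      apply intervalIntegral.integral_mono_on hσM (hint σ M hσIcc hMIcc) hint3
      intro s hs
      have h1 : b - (M - s) ≤ distCompl Ω (α s) := hlow2 s ⟨le_trans hσ0 hs.1, hs.2⟩
      have h2 : 0 < b - M + s := by
        have : b - M + σ ≤ b - M + s := by linarith [hs.1]
        linarith [hbσ, hwpos]
      rw [← one_div]
      have h1' : b - M + s ≤ distCompl Ω (α s) := by linarith
      exact one_div_le_one_div_of_le h2 h1'
    have heval : ∫ s in σ..M, ((b - M) + s)⁻¹
        = Real.log ((b - M) + M) - Real.log ((b - M) + σ) :=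
      integral_inv_add_eq hσM (by rw [show b - M + σ = b - M + σ from rfl]; linarith [hbσ, hwpos])
    rw [heval] at hcmp
    have e1 : b - M + M = b := by ring
    rw [e1, hbσ] at hcmp
    exact hcmp
  have hwlog : Real.log w₀ ≤ Real.log w :=
    (Real.log_le_log_iff hw₀pos hwpos).2 hww₀
  calc qhDist Ω x y ≤ qhLength Ω α M := hqh
    _ ≤ (Real.log a - Real.log w) + (Real.log b - Real.log w) := by
        rw [hsplit]; exact add_le_add hp1 hp2
    _ ≤ Real.log a + Real.log b - 2 * Real.log w₀ := by linarith

/-- Lower bound for the quasihyperbolic length of a subarc of a unit-speed curve. -/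
lemma log_le_integral_subarc {γ : ℝ → X} {L : ℝ} (hγ : IsUnitSpeedIn Ω γ L)
    (hpos : ∀ u ∈ Set.Icc (0:ℝ) L, 0 < distCompl Ω (γ u))
    {s t : ℝ} (hs : s ∈ Set.Icc (0:ℝ) L) (ht : t ∈ Set.Icc (0:ℝ) L) (hst : s ≤ t) :
    Real.log (distCompl Ω (γ s) + (t - s)) - Real.log (distCompl Ω (γ s))
      ≤ ∫ u in s..t, 1 / distCompl Ω (γ u) := by
  set a := distCompl Ω (γ s) with ha
  have hapos : 0 < a := hpos s hs
  have hup : ∀ u ∈ Set.Icc s t, distCompl Ω (γ u) ≤ (a - s) + u := by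
    intro u hu
    have huIcc : u ∈ Set.Icc (0:ℝ) L := ⟨le_trans hs.1 hu.1, le_trans hu.2 ht.2⟩
    have h1 : dist (γ s) (γ u) ≤ u - s := hγ.dist_le' hs huIcc hu.1
    have h2 := abs_distCompl_sub_le Ω (γ u) (γ s)
    rw [abs_le] at h2
    have := h2.2
    rw [← ha, dist_comm] at this
    linarith
  have hint1 : IntervalIntegrable (fun u => 1 / distCompl Ω (γ u)) volume s t :=
    ((hγ.continuousOn_inv_distCompl hpos).mono (Set.uIcc_subset_Icc hs ht)).intervalIntegrable
  have hint2 : IntervalIntegrable (fun u => ((a - s) + u)⁻¹) volume s t := by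
    apply ContinuousOn.intervalIntegrable
    apply ContinuousOn.inv₀ (by fun_prop)
    intro u hu
    rw [Set.uIcc_of_le hst] at hu
    intro hcon
    have : (a - s) + u = 0 := hcon
    linarith [hu.1]
  have hcmp : (∫ u in s..t, ((a - s) + u)⁻¹) ≤ ∫ u in s..t, 1 / distCompl Ω (γ u) := by
    apply intervalIntegral.integral_mono_on hst hint2 hint1
    intro u hu
    have h1 := hup u hu
    have h2 : 0 < distCompl Ω (γ u) := hpos u ⟨le_trans hs.1 hu.1, le_trans hu.2 ht.2⟩
    rw [← one_div]
    exact one_div_le_one_div_of_le h2 h1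
  have heval : (∫ u in s..t, ((a - s) + u)⁻¹)
      = Real.log ((a - s) + t) - Real.log ((a - s) + s) :=
    integral_inv_add_eq hst (by linarith)
  rw [heval] at hcmp
  have e1 : (a - s) + s = a := by ring
  have e2 : (a - s) + t = a + (t - s) := by ring
  rw [e1, e2] at hcmp
  exact hcmp

end KeyLemmas
section ContradictionLemmas

/-- If `y` is in the ball `B(x, d_Ω(x)/4)` then the quasihyperbolic distance is
less than `log(4/3)`. -/
lemma qhDist_lt_of_close (hX : IsLengthSpace X) (Ω : Set X) {x y : X}
    (hax : 0 < distCompl Ω x) (hcon : dist x y < distCompl Ω x / 4) :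
    qhDist Ω x y < Real.log (4 / 3) := by
  set a := distCompl Ω x with ha
  set d := dist x y with hd
  have hd0 : 0 ≤ d := dist_nonneg
  set ε := (a / 4 - d) / 2 with hε
  have hεpos : 0 < ε := by rw [hε]; linarith
  have hlt : d + ε < a := by rw [hε]; linarith
  have hup := qhDist_le_log_one_sided hX Ω hεpos hlt
  rw [← ha, ← hd] at hup
  have h34 : (0:ℝ) < (3/4) * a := by linarith
  have hlt2 : (3/4) * a < a - d - ε := by rw [hε]; linarith
  have hlog1 : Real.log ((3/4) * a) < Real.log (a - d - ε) := Real.log_lt_log h34 hlt2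
  have hlog2 : Real.log ((3/4) * a) = Real.log a - Real.log (4/3) := by
    rw [Real.log_mul (by norm_num) (ne_of_gt hax)]
    have : Real.log ((3:ℝ)/4) = - Real.log (4/3) := by
      rw [← Real.log_inv]; norm_num
    rw [this]; ring
  linarith

/-- If the balls `B(x, d_Ω(x)/4)` and `B(y, d_Ω(y)/4)` intersect then the
quasihyperbolic distance is less than `2 log(4/3)`. -/
lemma qhDist_lt_of_balls_meet (hX : IsLengthSpace X) (Ω : Set X) {x y : X}
    (hax : 0 < distCompl Ω x) (hby : 0 < distCompl Ω y)
    (hcon : dist x y < distCompl Ω x / 4 + distCompl Ω y / 4) :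
    qhDist Ω x y < 2 * Real.log (4 / 3) := by
  set a := distCompl Ω x with ha
  set b := distCompl Ω y with hb
  set d := dist x y with hd
  have hd0 : 0 ≤ d := dist_nonneg
  set ε := ((a + b) / 4 - d) / 2 with hε
  have hεpos : 0 < ε := by rw [hε]; linarith
  have hlt : d + ε < a + b := by rw [hε]; linarith
  have hup := qhDist_le_log_two_sided hX Ω hεpos hax hby hlt
  rw [← ha, ← hb, ← hd] at hup
  set w₀ := (a + b - d - ε) / 2 with hw₀
  have habpos : 0 < a + b := by linarith
  have hw₀gt : (3/8) * (a + b) < w₀ := by rw [hw₀, hε]; linarith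
  have h38pos : (0:ℝ) < (3/8) * (a + b) := by linarith
  -- AM-GM for the logs
  have hAM : Real.log a + Real.log b ≤ 2 * Real.log ((a + b) / 2) := by
    rw [← Real.log_mul (ne_of_gt hax) (ne_of_gt hby)]
    have h1 : a * b ≤ ((a + b) / 2) ^ 2 := by nlinarith [sq_nonneg (a - b)]
    have h2 : Real.log (a * b) ≤ Real.log (((a + b) / 2) ^ 2) :=
      (Real.log_le_log_iff (by positivity) (by positivity)).2 h1
    have h3 : Real.log (((a + b) / 2) ^ 2) = 2 * Real.log ((a + b) / 2) := by
      rw [Real.log_pow]; norm_num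
    linarith
  have hlogw : Real.log ((3/8) * (a + b)) < Real.log w₀ :=
    Real.log_lt_log h38pos hw₀gt
  have hdiff : Real.log ((a + b) / 2) - Real.log ((3/8) * (a + b)) = Real.log (4/3) := by
    rw [← Real.log_div (by positivity) (by positivity)]
    congr 1
    field_simp
    ring
  linarith

end ContradictionLemmas

/-- Lemma 5.4: decomposition of a quasihyperbolic geodesic into pieces
controlled by chained balls `B_i = B(y_i, d_Ω(y_i)/4)`. Points `y_i = γ(t i)` are taken
at parameters `0 = t 1 ≤ ⋯ ≤ t (k₁+1) = L`. -/
theorem geodesic_ball_chain (hX : IsLengthSpace X) (Ω : Set X)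
    (hΩ : IsProperSubdomain Ω) (x₁ x₂ : X)
    (γ : ℝ → X) (L : ℝ) (hγ : IsQHGeodesic Ω γ L)
    (h0 : γ 0 = x₁) (hL : γ L = x₂)
    (hfar : (1 / 2) * max (distCompl Ω x₁) (distCompl Ω x₂) ≤ dist x₁ x₂) :
    ∃ (k₁ : ℕ) (t : ℕ → ℝ), 1 ≤ k₁ ∧ t 1 = 0 ∧ t (k₁ + 1) = L ∧
      (∀ i, 1 ≤ i → i ≤ k₁ → t i ≤ t (i + 1)) ∧
      (∀ i, 1 ≤ i → i ≤ k₁ + 1 → t i ∈ Set.Icc (0:ℝ) L) ∧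
      -- (a): `y_{i+1} ∉ B_i` and `B_i ∩ B_{i+1} ≠ ∅`
      (∀ i, 1 ≤ i → i ≤ k₁ - 1 →
        distCompl Ω (γ (t i)) / 4 ≤ dist (γ (t i)) (γ (t (i + 1))) ∧
        dist (γ (t i)) (γ (t (i + 1))) <
          distCompl Ω (γ (t i)) / 4 + distCompl Ω (γ (t (i + 1))) / 4) ∧
      -- (b): `B_i ∩ B_j = ∅` whenever `|i - j| > 1` (when `k₁ ≥ 3`)
      (3 ≤ k₁ → ∀ i j, 1 ≤ i → i ≤ k₁ → 1 ≤ j → j ≤ k₁ → i + 1 < j →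
        distCompl Ω (γ (t i)) / 4 + distCompl Ω (γ (t j)) / 4 ≤
          dist (γ (t i)) (γ (t j))) ∧
      -- (c): `ℓ(γ[y_i, y_{i+1}]) ≤ (11/9)·d_Ω(y_i) ≤ (44/9)·d(y_i, y_{i+1})`
      (∀ i, 1 ≤ i → i ≤ k₁ - 1 →
        t (i + 1) - t i ≤ (11 / 9) * distCompl Ω (γ (t i)) ∧
        (11 / 9) * distCompl Ω (γ (t i)) ≤
          (44 / 9) * dist (γ (t i)) (γ (t (i + 1)))) ∧
      -- (d): `log(5/4) ≤ k_Ω(y_i, y_{i+1}) ≤ 20/27`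
      (∀ i, 1 ≤ i → i ≤ k₁ - 1 →
        Real.log (5 / 4) ≤ qhDist Ω (γ (t i)) (γ (t (i + 1))) ∧
        qhDist Ω (γ (t i)) (γ (t (i + 1))) ≤ 20 / 27) ∧
      -- (e): the last piece
      (t (k₁ + 1) - t k₁ ≤ (9 / 20) * distCompl Ω (γ (t k₁)) ∧
        qhDist Ω (γ (t k₁)) (γ (t (k₁ + 1))) ≤ 10 / 27) := by
  clear hfar h0 hL
  obtain ⟨hopen, -, hneq⟩ := hΩ
  obtain ⟨hγu, hγgeo⟩ := hγ
  have hL0 : 0 ≤ L := hγu.nonneg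
  have h0Icc : (0:ℝ) ∈ Set.Icc (0:ℝ) L := Set.left_mem_Icc.2 hL0
  have hLIcc : L ∈ Set.Icc (0:ℝ) L := Set.right_mem_Icc.2 hL0
  have hpos : ∀ u ∈ Set.Icc (0:ℝ) L, 0 < distCompl Ω (γ u) :=
    fun u hu => distCompl_pos_of_mem hopen hneq (hγu.mem u hu)
  have hgcont : ContinuousOn (fun u => 1 / distCompl Ω (γ u)) (Set.Icc 0 L) :=
    hγu.continuousOn_inv_distCompl hpos
  have hgint : ∀ u v : ℝ, u ∈ Set.Icc (0:ℝ) L → v ∈ Set.Icc (0:ℝ) L →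
      IntervalIntegrable (fun u => 1 / distCompl Ω (γ u)) volume u v :=
    fun u v hu hv => (hgcont.mono (Set.uIcc_subset_Icc hu hv)).intervalIntegrable
  set F : ℝ → ℝ := fun u => ∫ v in (0:ℝ)..u, 1 / distCompl Ω (γ v) with hFdef
  have hF0 : F 0 = 0 := intervalIntegral.integral_same
  have hFadd : ∀ u v : ℝ, u ∈ Set.Icc (0:ℝ) L → v ∈ Set.Icc (0:ℝ) L →
      (∫ w in u..v, 1 / distCompl Ω (γ w)) = F v - F u := by
    intro u v hu hv
    have h := intervalIntegral.integral_add_adjacent_intervals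
      (hgint 0 u h0Icc hu) (hgint u v hu hv)
    rw [hFdef]
    simp only []
    linarith [h]
  have hFmono : ∀ u v : ℝ, u ∈ Set.Icc (0:ℝ) L → v ∈ Set.Icc (0:ℝ) L → u ≤ v →
      F u ≤ F v := by
    intro u v hu hv huv
    have h1 : 0 ≤ ∫ w in u..v, 1 / distCompl Ω (γ w) :=
      intervalIntegral.integral_nonneg huv
        (fun w _ => one_div_nonneg.2 Metric.infDist_nonneg)
    rw [hFadd u v hu hv] at h1
    linarith
  have hFcont : ContinuousOn F (Set.Icc 0 L) := by
    have h := intervalIntegral.continuousOn_primitive_interval'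
      (hgint 0 L h0Icc hLIcc) Set.left_mem_uIcc
    rwa [Set.uIcc_of_le hL0] at h
  set τ := Real.log (4 / 3) with hτ
  have hτpos : 0 < τ := Real.log_pos (by norm_num)
  have hτ13 : τ ≤ 1 / 3 := by
    have h := Real.log_le_sub_one_of_pos (show (0:ℝ) < 4/3 by norm_num)
    rw [← hτ] at h; linarith
  set K := F L with hK
  have hK0 : 0 ≤ K := by rw [hK, ← hF0]; exact hFmono 0 L h0Icc hLIcc hL0
  set n := Nat.floor (K / τ) with hn
  have hnK : (n : ℝ) * τ ≤ K := by
    have h := Nat.floor_le (div_nonneg hK0 hτpos.le)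
    rw [← hn] at h
    calc (n:ℝ) * τ ≤ (K / τ) * τ := mul_le_mul_of_nonneg_right h hτpos.le
      _ = K := div_mul_cancel₀ K (ne_of_gt hτpos)
  have hKn : K < ((n:ℝ) + 1) * τ := by
    have h := Nat.lt_floor_add_one (K / τ)
    rw [← hn] at h
    calc K = (K / τ) * τ := (div_mul_cancel₀ K (ne_of_gt hτpos)).symm
      _ < ((n:ℝ) + 1) * τ := by
          apply mul_lt_mul_of_pos_right _ hτpos
          exact_mod_cast h
  -- choose the points
  have hchoice : ∀ m : ℕ, ∃ u, u ∈ Set.Icc (0:ℝ) L ∧ ((m:ℝ) * τ ≤ K → F u = (m:ℝ) * τ) := by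
    intro m
    by_cases h : (m:ℝ) * τ ≤ K
    · have hmem : (m:ℝ) * τ ∈ Set.Icc (F 0) (F L) := by
        rw [hF0]
        exact ⟨mul_nonneg (Nat.cast_nonneg m) hτpos.le, h⟩
      obtain ⟨u, hu, hFu⟩ := intermediate_value_Icc hL0 hFcont hmem
      exact ⟨u, hu, fun _ => hFu⟩
    · exact ⟨0, h0Icc, fun h' => absurd h' h⟩
  choose sfun hsIcc hsF using hchoice
  set t : ℕ → ℝ := fun i => if i ≤ 1 then 0 else if n + 2 ≤ i then L else sfun (i - 1)
    with htdef
  have ht1 : t 1 = 0 := by simp [htdef]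
  have htop : t (n + 2) = L := by
    simp only [htdef]
    rw [if_neg (by omega), if_pos (by omega)]
  have htIcc : ∀ i, t i ∈ Set.Icc (0:ℝ) L := by
    intro i
    simp only [htdef]
    split_ifs
    · exact h0Icc
    · exact hLIcc
    · exact hsIcc _
  have hFt : ∀ i : ℕ, 1 ≤ i → i ≤ n + 1 → F (t i) = ((i:ℝ) - 1) * τ := by
    intro i h1 h2
    rcases eq_or_lt_of_le h1 with h | h
    · rw [← h, ht1, hF0]; norm_num
    · have h2' : 2 ≤ i := h
      have harg : ((i - 1 : ℕ) : ℝ) * τ ≤ K := by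
        have hle : ((i - 1 : ℕ) : ℝ) ≤ (n : ℝ) := by exact_mod_cast (by omega : i - 1 ≤ n)
        calc ((i - 1 : ℕ) : ℝ) * τ ≤ (n : ℝ) * τ := mul_le_mul_of_nonneg_right hle hτpos.le
          _ ≤ K := hnK
      have hti : t i = sfun (i - 1) := by
        simp only [htdef]
        rw [if_neg (by omega), if_neg (by omega)]
      rw [hti, hsF (i - 1) harg, Nat.cast_sub (by omega : 1 ≤ i)]
      norm_num
  have htmono : ∀ i j : ℕ, 1 ≤ i → i ≤ j → j ≤ n + 1 → t i ≤ t j := by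
    intro i j h1 hij hj
    rcases eq_or_lt_of_le hij with h | h
    · rw [h]
    · by_contra hcon
      push_neg at hcon
      have hF1 := hFmono (t j) (t i) (htIcc j) (htIcc i) hcon.le
      rw [hFt i h1 (le_trans hij hj), hFt j (by omega) hj] at hF1
      have hcast : (i:ℝ) + 1 ≤ (j:ℝ) := by exact_mod_cast h
      nlinarith
  -- the per-piece facts
  have hstep : ∀ i : ℕ, 1 ≤ i → i ≤ n →
      dist (γ (t i)) (γ (t (i + 1))) ≤ t (i + 1) - t i ∧
      t (i + 1) - t i ≤ distCompl Ω (γ (t i)) / 3 ∧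
      distCompl Ω (γ (t i)) / 4 ≤ dist (γ (t i)) (γ (t (i + 1))) ∧
      qhDist Ω (γ (t i)) (γ (t (i + 1))) = τ := by
    intro i h1 h2
    have hIi := htIcc i
    have hIi1 := htIcc (i + 1)
    have hle : t i ≤ t (i + 1) := htmono i (i + 1) h1 (Nat.le_succ i) (by omega)
    have hd : dist (γ (t i)) (γ (t (i + 1))) ≤ t (i + 1) - t i := hγu.dist_le' hIi hIi1 hle
    have hInt : (∫ u in t i..t (i + 1), 1 / distCompl Ω (γ u)) = τ := by
      rw [hFadd (t i) (t (i + 1)) hIi hIi1, hFt i h1 (by omega),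
        hFt (i + 1) (by omega) (by omega)]
      push_cast
      ring
    have hqd : qhDist Ω (γ (t i)) (γ (t (i + 1))) = τ := by
      rw [← hγgeo (t i) hIi (t (i + 1)) hIi1 hle]
      exact hInt
    have hapos : 0 < distCompl Ω (γ (t i)) := hpos (t i) hIi
    have hlog := log_le_integral_subarc hγu hpos hIi hIi1 hle
    rw [hInt] at hlog
    have hsum : distCompl Ω (γ (t i)) + (t (i + 1) - t i)
        ≤ (4 / 3) * distCompl Ω (γ (t i)) := by
      have hlog2 : Real.log (distCompl Ω (γ (t i)) + (t (i + 1) - t i))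
          ≤ Real.log ((4 / 3) * distCompl Ω (γ (t i))) := by
        rw [Real.log_mul (by norm_num) (ne_of_gt hapos), ← hτ]
        linarith
      exact (Real.log_le_log_iff (by linarith) (by linarith)).1 hlog2
    have hℓ : t (i + 1) - t i ≤ distCompl Ω (γ (t i)) / 3 := by linarith
    have hdist4 : distCompl Ω (γ (t i)) / 4 ≤ dist (γ (t i)) (γ (t (i + 1))) := by
      by_contra hcon
      push_neg at hcon
      have hlt := qhDist_lt_of_close hX Ω hapos hcon
      rw [hqd, hτ] at hlt
      exact lt_irrefl _ hlt
    exact ⟨hd, hℓ, hdist4, hqd⟩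
  -- last piece
  have hIk := htIcc (n + 1)
  have hlek : t (n + 1) ≤ L := hIk.2
  have hqlast : qhDist Ω (γ (t (n + 1))) (γ L) = K - (n : ℝ) * τ := by
    rw [← hγgeo (t (n + 1)) hIk L hLIcc hlek,
      hFadd (t (n + 1)) L hIk hLIcc, hFt (n + 1) (by omega) (le_refl _), ← hK]
    push_cast
    ring
  have hrlt : K - (n : ℝ) * τ < τ := by linarith
  have hloglast := log_le_integral_subarc hγu hpos hIk hLIcc hlek
  rw [hFadd (t (n + 1)) L hIk hLIcc, hFt (n + 1) (by omega) (le_refl _), ← hK] at hloglast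
  have haklast : 0 < distCompl Ω (γ (t (n + 1))) := hpos _ hIk
  have hlastlen : L - t (n + 1) ≤ distCompl Ω (γ (t (n + 1))) / 3 := by
    have h1 : Real.log (distCompl Ω (γ (t (n + 1))) + (L - t (n + 1)))
        ≤ Real.log ((4 / 3) * distCompl Ω (γ (t (n + 1)))) := by
      rw [Real.log_mul (by norm_num) (ne_of_gt haklast), ← hτ]
      push_cast at hloglast
      linarith
    have h2 := (Real.log_le_log_iff (by linarith) (by linarith)).1 h1
    linarith
  -- assemble
  refine ⟨n + 1, t, by omega, ht1, htop, ?_, fun i _ _ => htIcc i, ?_, ?_, ?_, ?_, ?_⟩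
  · -- monotonicity
    intro i h1 h2
    by_cases h : i ≤ n
    · exact htmono i (i + 1) h1 (Nat.le_succ i) (by omega)
    · have : i = n + 1 := by omega
      rw [this, htop]
      exact hlek
  · -- (a)
    intro i h1 h2
    have h2' : i ≤ n := by omega
    obtain ⟨hd, hℓ, hdist4, -⟩ := hstep i h1 h2'
    refine ⟨hdist4, ?_⟩
    have habs := abs_distCompl_sub_le Ω (γ (t i)) (γ (t (i + 1)))
    rw [abs_le] at habs
    have hapos : 0 < distCompl Ω (γ (t i)) := hpos _ (htIcc i)
    linarith [habs.1]
  · -- (b)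
    intro _ i j h1 hi hj1 hj hij
    by_contra hcon
    push_neg at hcon
    have hlt := qhDist_lt_of_balls_meet hX Ω (hpos _ (htIcc i)) (hpos _ (htIcc j)) hcon
    have hle : t i ≤ t j := htmono i j h1 (by omega) hj
    have hqd : qhDist Ω (γ (t i)) (γ (t j)) = ((j:ℝ) - (i:ℝ)) * τ := by
      rw [← hγgeo (t i) (htIcc i) (t j) (htIcc j) hle,
        hFadd (t i) (t j) (htIcc i) (htIcc j), hFt i h1 (by omega), hFt j (by omega) hj]
      ring
    have hcast : (i:ℝ) + 2 ≤ (j:ℝ) := by exact_mod_cast (by omega : i + 2 ≤ j)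
    rw [hqd, ← hτ] at hlt
    nlinarith
  · -- (c)
    intro i h1 h2
    have h2' : i ≤ n := by omega
    obtain ⟨hd, hℓ, hdist4, -⟩ := hstep i h1 h2'
    have hapos : 0 < distCompl Ω (γ (t i)) := hpos _ (htIcc i)
    constructor
    · linarith
    · linarith
  · -- (d)
    intro i h1 h2
    have h2' : i ≤ n := by omega
    obtain ⟨-, -, -, hqd⟩ := hstep i h1 h2'
    rw [hqd]
    constructor
    · rw [hτ]
      exact (Real.log_le_log_iff (by norm_num) (by norm_num)).2 (by norm_num)
    · linarith
  · -- (e)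
    rw [htop]
    constructor
    · linarith
    · rw [hqlast]
      linarith
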